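/- In the heterogeneous regret game, if v ≥ 1/p, then the profile in which every player chooses risky is a pure strategy Nash equilibrium, regardless of the players' individual coefficients of regret aversion κ_i ≥ 0. -/

import Mathlib

namespace RegretGame

/-- An action in the regret game: choose the risky lottery or the safe lottery. -/
inductive Act : Type
  | risky : Act
  | safe : Act
deriving DecidableEq, Repr

/-- `numRisky a i` is the number of players other than `i` choosing the risky lottery
at the action profile `a`. -/
def numRisky {N : ℕ} (a : Fin N → Act) (i : Fin N) : ℕ :=
  (Finset.univ.filter (fun j => j ≠ i ∧ a j = Act.risky)).card

/-- Player `i`'s expected payoff in the heterogeneous regret game at action profile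
`a`, where player `i` has her own coefficient of regret aversion `κ i`. -/
noncomputable def payoffHet {N : ℕ} (p v : ℝ) (κ : Fin N → ℝ) (q : ℕ → ℝ)
    (a : Fin N → Act) (i : Fin N) : ℝ :=
  if a i = Act.risky then p * v - (1 - p) * κ i
  else 1 - p * q (numRisky a i) * κ i * (v - 1)

/-- A pure strategy Nash equilibrium of the heterogeneous regret game: no player can
strictly increase her expected payoff by unilaterally changing her own action. -/
def IsNashHet {N : ℕ} (p v : ℝ) (κ : Fin N → ℝ) (q : ℕ → ℝ) (a : Fin N → Act) : Prop :=
  ∀ (i : Fin N) (b : Act),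
    payoffHet p v κ q (Function.update a i b) i ≤ payoffHet p v κ q a i

theorem numRisky_update_self {N : ℕ} (a : Fin N → Act) (i : Fin N) (b : Act) :
    numRisky (Function.update a i b) i = numRisky a i := by
  unfold numRisky
  congr 1
  refine Finset.filter_congr fun j _ => and_congr_right fun hj => ?_
  rw [Function.update_of_ne hj]

theorem numRisky_const_risky {N : ℕ} (i : Fin N) :
    numRisky (fun _ : Fin N => Act.risky) i = N - 1 := by
  simp only [numRisky, and_true, Finset.filter_ne', Finset.mem_univ, Finset.card_erase_of_mem,
    Finset.card_univ, Fintype.card_fin]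

/-- The gap between the two sides is `(p * v - 1) * (1 + k)`. -/
theorem safe_payoff_le_risky_payoff {p v k : ℝ} (hpv : 1 ≤ p * v) (hk : 0 ≤ k) :
    1 - p * k * (v - 1) ≤ p * v - (1 - p) * k := by
  nlinarith

theorem regret_game_het_all_risky_nash_general
    (N : ℕ) (p v : ℝ)
    (hp : 0 < p ∧ p < 1)
    (κ : Fin N → ℝ) (hκ : ∀ i, 0 ≤ κ i)
    (q : ℕ → ℝ)
    (hqN : q (N - 1) = 1)
    (hthresh : v ≥ 1 / p) :
    IsNashHet p v κ q (fun _ : Fin N => Act.risky) := by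
  have hpv : 1 ≤ p * v := (div_le_iff₀' hp.1).mp hthresh
  rintro i (_ | _)
  · rw [Function.update_eq_self]
  · have h := safe_payoff_le_risky_payoff hpv (hκ i)
    simpa [payoffHet, numRisky_update_self, numRisky_const_risky, hqN] using h

/-- In the heterogeneous regret game, if `v ≥ 1/p` then the all-risky profile is a
pure strategy Nash equilibrium, regardless of the players' individual coefficients of
regret aversion `κ i ≥ 0`. -/
theorem regret_game_het_all_risky_nash
    (N : ℕ) (hN : 2 ≤ N) (p v : ℝ)
    (hp : 0 < p ∧ p < 1) (hv : 1 < v)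
    (κ : Fin N → ℝ) (hκ : ∀ i, 0 ≤ κ i)
    (q : ℕ → ℝ)
    (hq01 : ∀ m ≤ N - 1, 0 ≤ q m ∧ q m ≤ 1)
    (hq0 : q 0 = 0) (hqN : q (N - 1) = 1)
    (hqmono : ∀ m₁ m₂, m₁ < m₂ → m₂ ≤ N - 1 → q m₁ < q m₂)
    (hthresh : v ≥ 1 / p) :
    IsNashHet p v κ q (fun _ : Fin N => Act.risky) :=
  regret_game_het_all_risky_nash_general N p v hp κ hκ q hqN hthresh

end RegretGame
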